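/- arXiv:1810.09921 — 2 statements merged into one kernel-verified Lean document; each statement's English description precedes it below -/
import Mathlib

section
/- In the inhomogeneous random K-out graph H(n; μ, K) with n ≥ 3, K_1 = 1, and 1 = K_1 ≤ K_2 ≤ … ≤ K_r < n, the probability of the event U_{12} (that vertices 1 and 2 are both class-1 and form an isolated component) equals μ_1² · (1/(n−1))² · ( Σ_{i=1}^r μ_i · C(n−3, K_i)/C(n−1, K_i) )^{n−2}, where C(x, y) denotes the binomial coefficient with the convention C(x, y) = 0 when x < y. -/
open Finset Filter

noncomputable section

/-- A configuration assigns to each vertex a class in `Fin r` and a selection set. -/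
abbrev Config (n r : ℕ) := Fin n → Fin r × Finset (Fin n)

/-- Probability weight of a configuration: each vertex `v` independently has class `i`
with probability `μ i`, and given class `i`, its selection set is a uniformly random
`K i`-subset of the other vertices. -/
noncomputable def wt {r : ℕ} (n : ℕ) (μ : Fin r → ℝ) (K : Fin r → ℕ)
    (ω : Config n r) : ℝ :=
  ∏ v : Fin n,
    if (ω v).2.card = K (ω v).1 ∧ v ∉ (ω v).2 then
      μ (ω v).1 / ((n - 1).choose (K (ω v).1) : ℝ)
    else 0

/-- Probability of an event in the inhomogeneous random K-out graph model. -/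
noncomputable def Pr {r : ℕ} (n : ℕ) (μ : Fin r → ℝ) (K : Fin r → ℕ)
    (E : Set (Config n r)) : ℝ :=
  ∑ ω : Config n r, E.indicator (wt n μ K) ω

/-- Expectation of a real-valued random variable in the model. -/
noncomputable def Ex {r : ℕ} (n : ℕ) (μ : Fin r → ℝ) (K : Fin r → ℕ)
    (f : Config n r → ℝ) : ℝ :=
  ∑ ω : Config n r, f ω * wt n μ K ω

/-- The undirected graph induced by a configuration: `u ~ v` iff at least one of
them selected the other. -/
def graphOf {n r : ℕ} (ω : Config n r) : SimpleGraph (Fin n) where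
  Adj u v := u ≠ v ∧ (u ∈ (ω v).2 ∨ v ∈ (ω u).2)
  symm := ⟨fun _ _ h => ⟨h.1.symm, h.2.symm⟩⟩
  loopless := ⟨fun _ h => h.1 rfl⟩

/-- Probability that the inhomogeneous random K-out graph is connected. -/
noncomputable def Pconn {r : ℕ} (n : ℕ) (μ : Fin r → ℝ) (K : Fin r → ℕ) : ℝ :=
  Pr n μ K {ω | (graphOf ω).Connected}

/-- The event `U_{ij}`: vertices `i` and `j` both have class `c`, each selected exactly
the other, and no other vertex selected either of them. -/
def Uevent {n r : ℕ} (c : Fin r) (i j : Fin n) : Set (Config n r) :=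
  {ω | (ω i).1 = c ∧ (ω j).1 = c ∧ (ω i).2 = {j} ∧ (ω j).2 = {i} ∧
    ∀ l : Fin n, l ≠ i → l ≠ j → i ∉ (ω l).2 ∧ j ∉ (ω l).2}

/-- `Y`: the number of isolated components consisting of two class-`c` vertices. -/
noncomputable def Ycount {n r : ℕ} (c : Fin r) (ω : Config n r) : ℝ :=
  ∑ p : Fin n × Fin n,
    if p.1 < p.2 then (Uevent c p.1 p.2).indicator (fun _ => (1 : ℝ)) ω else 0

/-- The event `B_{n,ℓ}`: the set of vertices with index `< ℓ` is isolated, i.e. there is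
no edge between it and its complement. -/
def Bevent (n r : ℕ) (l : ℕ) : Set (Config n r) :=
  {ω | ∀ u v : Fin n, (u : ℕ) < l → ¬ (v : ℕ) < l → u ∉ (ω v).2 ∧ v ∉ (ω u).2}


/-!
The weight of a configuration is a product over vertices, and `U_{12}` constrains each vertex's
choice separately, so its probability is a product of per-vertex probabilities. Vertices 1 and 2
must be class 1 and pick each other, each with probability `μ₁ / (n - 1)` since `K₁ = 1`; every
other vertex must, besides itself, avoid 1 and 2, i.e. pick its `K_i` out-neighbours among the
remaining `n - 3` vertices, which has probability `∑ μ_i C(n-3, K_i) / C(n-1, K_i)`.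
-/

section

variable {n r : ℕ} (μ : Fin r → ℝ) (K : Fin r → ℕ)

def vertexWt (v : Fin n) (x : Fin r × Finset (Fin n)) : ℝ :=
  if x.2.card = K x.1 ∧ v ∉ x.2 then μ x.1 / ((n - 1).choose (K x.1) : ℝ) else 0

theorem Pr_pi (A : Fin n → Set (Fin r × Finset (Fin n))) :
    Pr n μ K (Set.univ.pi A) = ∏ v, ∑ x, (A v).indicator (vertexWt μ K v) x := by
  rw [prod_univ_sum, Fintype.piFinset_univ]
  refine sum_congr rfl fun ω _ => ?_
  by_cases hω : ω ∈ Set.univ.pi A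
  · rw [Set.indicator_of_mem hω]
    exact prod_congr rfl fun v _ =>
      (Set.indicator_of_mem (hω v (Set.mem_univ v)) (vertexWt μ K v)).symm
  · rw [Set.indicator_of_notMem hω]
    obtain ⟨v, hv⟩ := not_forall.mp (Set.mem_univ_pi.not.mp hω)
    exact (prod_eq_zero (mem_univ v) (Set.indicator_of_notMem hv (vertexWt μ K v))).symm

theorem sum_indicator_disjoint_vertexWt {v : Fin n} {B : Finset (Fin n)} (hv : v ∉ B) :
    ∑ x, {x : Fin r × Finset (Fin n) | Disjoint x.2 B}.indicator (vertexWt μ K v) x =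
      ∑ i, μ i * ((n - 1 - #B).choose (K i) : ℝ) / ((n - 1).choose (K i) : ℝ) := by
  rw [Fintype.sum_prod_type]
  refine sum_congr rfl fun i _ => ?_
  have hcard : #(insert v B)ᶜ = n - 1 - #B := by
    rw [card_compl, Fintype.card_fin, card_insert_of_notMem hv]; omega
  have hsub (S : Finset (Fin n)) : S ⊆ (insert v B)ᶜ ↔ v ∉ S ∧ Disjoint S B := by
    rw [subset_compl_iff_disjoint_right, disjoint_insert_right, and_comm]
  calc ∑ S, {x : Fin r × Finset (Fin n) | Disjoint x.2 B}.indicator (vertexWt μ K v) (i, S)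
      = ∑ S ∈ powersetCard (K i) (insert v B)ᶜ, μ i / ((n - 1).choose (K i) : ℝ) := by
        rw [← univ_inter (powersetCard _ _), ← sum_ite_mem]
        refine sum_congr rfl fun S _ => ?_
        simp only [Set.indicator, Set.mem_ofPred_eq, vertexWt, mem_powersetCard, hsub]
        rw [← ite_and]
        exact if_congr (by tauto) rfl rfl
    _ = _ := by rw [sum_const, card_powersetCard, hcard, nsmul_eq_mul]; ring

theorem vertexWt_singleton {c : Fin r} (hc : K c = 1) {i j : Fin n} (hij : i ≠ j) :
    vertexWt μ K i (c, {j}) = μ c / ((n : ℝ) - 1) := by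
  rw [vertexWt, if_pos ⟨by rw [card_singleton, hc], by simpa using hij⟩, hc,
    Nat.choose_one_right, Nat.cast_pred i.pos]

def isolatedPairPattern (c : Fin r) (i j v : Fin n) : Set (Fin r × Finset (Fin n)) :=
  if v = i then {(c, {j})} else if v = j then {(c, {i})} else {x | Disjoint x.2 {i, j}}

theorem Uevent_eq_pi (c : Fin r) {i j : Fin n} (hij : i ≠ j) :
    Uevent c i j = Set.univ.pi (isolatedPairPattern c i j) := by
  ext ω
  have hpair (S : Finset (Fin n)) : Disjoint S {i, j} ↔ i ∉ S ∧ j ∉ S := by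
    rw [disjoint_insert_right, disjoint_singleton_right]
  simp only [Uevent, Set.mem_univ_pi, isolatedPairPattern, Set.mem_ofPred_eq]
  constructor
  · rintro ⟨hci, hcj, hSi, hSj, hothers⟩ v
    split_ifs with hvi hvj
    · subst hvi; exact Prod.ext hci hSi
    · subst hvj; exact Prod.ext hcj hSj
    · exact (hpair _).2 (hothers v hvi hvj)
  · intro h
    have hi := h i
    have hj := h j
    rw [if_pos rfl, Set.mem_singleton_iff] at hi
    rw [if_neg hij.symm, if_pos rfl, Set.mem_singleton_iff] at hj
    refine ⟨by rw [hi], by rw [hj], by rw [hi], by rw [hj], fun l hli hlj => ?_⟩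
    simpa only [if_neg hli, if_neg hlj, Set.mem_ofPred_eq, hpair] using h l

theorem Pr_Uevent (c : Fin r) {i j : Fin n} (hij : i ≠ j) :
    Pr n μ K (Uevent c i j) = vertexWt μ K i (c, {j}) * vertexWt μ K j (c, {i}) *
      (∑ k, μ k * ((n - 3).choose (K k) : ℝ) / ((n - 1).choose (K k) : ℝ)) ^ (n - 2) := by
  have hsingle (v : Fin n) (a : Fin r × Finset (Fin n)) :
      ∑ x, ({a} : Set _).indicator (vertexWt μ K v) x = vertexWt μ K v a := by
    rw [Fintype.sum_eq_single a fun _ hx =>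
        Set.indicator_of_notMem (Set.notMem_singleton_iff.mpr hx) _,
      Set.indicator_of_mem (Set.mem_singleton a)]
  have hothers : ∀ v ∈ ({i, j} : Finset (Fin n))ᶜ,
      ∑ x, (isolatedPairPattern c i j v).indicator (vertexWt μ K v) x =
        ∑ k, μ k * ((n - 3).choose (K k) : ℝ) / ((n - 1).choose (K k) : ℝ) := by
    intro v hv
    obtain ⟨hvi, hvj⟩ : v ≠ i ∧ v ≠ j := by simpa [not_or] using hv
    rw [isolatedPairPattern, if_neg hvi, if_neg hvj,
      sum_indicator_disjoint_vertexWt μ K (by simpa [not_or] using ⟨hvi, hvj⟩), card_pair hij,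
      Nat.sub_sub]
  rw [Uevent_eq_pi c hij, Pr_pi, ← prod_mul_prod_compl {i, j}, prod_pair hij,
    prod_congr rfl hothers, prod_const, card_compl, card_pair hij, Fintype.card_fin,
    isolatedPairPattern, if_pos rfl, isolatedPairPattern, if_neg hij.symm, if_pos rfl,
    hsingle, hsingle]

end

theorem prob_U12_general
    (r : ℕ) (μ : Fin r → ℝ)
    (c0 : Fin r)
    (n : ℕ)
    (K : Fin r → ℕ)
    (hK1 : K c0 = 1)
    (v0 v1 : Fin n) (hv0 : (v0 : ℕ) = 0) (hv1 : (v1 : ℕ) = 1) :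
    Pr n μ K (Uevent c0 v0 v1) =
      (μ c0) ^ 2 * (1 / ((n : ℝ) - 1)) ^ 2 *
        (∑ i, μ i * ((n - 3).choose (K i) : ℝ) / ((n - 1).choose (K i) : ℝ)) ^ (n - 2) := by
  have h01 : v0 ≠ v1 := Fin.ne_of_val_ne (by omega)
  rw [Pr_Uevent μ K c0 h01, vertexWt_singleton μ K hK1 h01, vertexWt_singleton μ K hK1 h01.symm]
  ring

/-- With `K₁ = 1`, the probability of the event `U_{12}` (vertices `1`
and `2` are both class-1 and form an isolated component) equals
`μ₁² (1/(n−1))² ( ∑ i, μ i C(n−3, K i)/C(n−1, K i) )^{n−2}`. -/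
theorem prob_U12
    (r : ℕ) (hr : 1 ≤ r) (μ : Fin r → ℝ)
    (hμ : ∀ i, 0 < μ i) (hsum : ∑ i, μ i = 1)
    (c0 : Fin r) (hc0 : (c0 : ℕ) = 0)
    (n : ℕ) (hn : 3 ≤ n)
    (K : Fin r → ℕ) (hmono : Monotone K) (hone : ∀ i, 1 ≤ K i) (hlt : ∀ i, K i < n)
    (hK1 : K c0 = 1)
    (v0 v1 : Fin n) (hv0 : (v0 : ℕ) = 0) (hv1 : (v1 : ℕ) = 1) :
    Pr n μ K (Uevent c0 v0 v1) =
      (μ c0) ^ 2 * (1 / ((n : ℝ) - 1)) ^ 2 *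
        (∑ i, μ i * ((n - 3).choose (K i) : ℝ) / ((n - 1).choose (K i) : ℝ)) ^ (n - 2) :=
  prob_U12_general r μ c0 n K hK1 v0 v1 hv0 hv1
end
end

section
/- In the inhomogeneous random K-out graph H(n; μ, K) with r ≥ 2, 1 ≤ K_1 ≤ … ≤ K_r < n, n sufficiently large, μ̃ = Σ_{i=1}^{r−1} μ_i, and K_r ≥ ⌈4·((1/2)^{K_r−1}/μ̃) + 1⌉, the total union-bound sum satisfies Σ_{ℓ=2}^{⌊n/2⌋} C(n, ℓ) · P[B_{n,ℓ}] ≤ (μ̃²/(1−μ̃)) · Ψ(n, μ, K), where Ψ(n, μ, K) = max{ exp(−2(1−μ̃)((K_r−1)/4 − (1/2)^{K_r−1}/μ̃)), exp(−(1−μ̃)(n/2)(1 − e^{−1} − (1/2)^{K_r−1}/μ̃)) }. -/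
/-!
The vertices of `S = {1, …, ℓ}` must all choose inside `S` and the others outside `S`; these are
independent events, so `P[B_{n,ℓ}] = A^ℓ B^(n-ℓ)`, where `A` (resp. `B`) is the probability that a
single vertex picks its whole set among `ℓ - 1` (resp. `n - ℓ - 1`) given vertices. With
`C(m,k)/C(n-1,k) ≤ (m/(n-1))^k`, and treating every class but the last as if it had `K_i = 1`,
`A ≤ q μ̃ exp((1-μ̃) X)` and `B ≤ β exp(-(1-μ̃)(1 - β^(K_r-1)))`, where `q = (ℓ-1)/(n-1)`,
`β = (n-ℓ-1)/(n-1)` and `X = (1/2)^(K_r-1)/μ̃`. As `C(n,ℓ) q^ℓ β^(n-ℓ)` is at most a binomial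
probability at `p = ℓ/n`, `C(n,ℓ) P[B_{n,ℓ}] ≤ μ̃^ℓ exp((1-μ̃)(ℓX - (n-ℓ)(1 - β^(K_r-1))))`.
Since `β^(K_r-1) ≤ exp(-t)` with `t = ℓ(K_r-1)/(n-1)`, the exponent is bounded by the second
term of `Ψ` when `t ≥ 1`, and by the first one when `t ≤ 1`, using the chord of `exp` on
`[-1, 0]` and `K_r - 1 ≥ 4X`. Summing `μ̃^ℓ` over `ℓ ≥ 2` gives the factor `μ̃²/(1-μ̃)`.
-/

open Finset Filter

noncomputable section

theorem Nat.choose_mul_pow_le_choose_mul_pow {a b : ℕ} (m : ℕ) (hab : a ≤ b) :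
    a.choose m * b ^ m ≤ b.choose m * a ^ m := by
  have hdesc : a.descFactorial m * b ^ m ≤ b.descFactorial m * a ^ m := by
    have hpow : ∀ c : ℕ, c ^ m = ∏ _i ∈ range m, c := by simp
    rw [Nat.descFactorial_eq_prod_range, Nat.descFactorial_eq_prod_range, hpow a, hpow b,
      ← Finset.prod_mul_distrib, ← Finset.prod_mul_distrib]
    refine Finset.prod_le_prod' fun i _ => ?_
    rw [Nat.sub_mul, Nat.sub_mul, Nat.mul_comm a b]
    exact Nat.sub_le_sub_left (Nat.mul_le_mul_left i hab) _
  rw [Nat.descFactorial_eq_factorial_mul_choose, Nat.descFactorial_eq_factorial_mul_choose,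
    mul_assoc, mul_assoc] at hdesc
  exact Nat.le_of_mul_le_mul_left hdesc (Nat.factorial_pos m)

theorem choose_div_choose_le_div_pow {α : Type*} [Field α] [LinearOrder α] [IsStrictOrderedRing α]
    {a b : ℕ} (m : ℕ) (hab : a ≤ b) :
    (a.choose m : α) / b.choose m ≤ ((a : α) / b) ^ m := by
  rcases (Nat.choose b m).eq_zero_or_pos with hb | hb
  · rw [hb, Nat.cast_zero, div_zero]
    positivity
  rcases b.eq_zero_or_pos with rfl | hb0
  · obtain rfl : a = 0 := Nat.le_zero.mp hab
    cases m <;> simp_all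
  rw [div_pow, div_le_div_iff₀ (by exact_mod_cast hb) (by positivity)]
  exact_mod_cast (Nat.choose_mul_pow_le_choose_mul_pow m hab).trans_eq (mul_comm _ _)

theorem choose_mul_pow_mul_one_sub_pow_le_one {α : Type*} [CommRing α] [LinearOrder α]
    [IsStrictOrderedRing α] (n l : ℕ) {p : α} (hp0 : 0 ≤ p) (hp1 : p ≤ 1) :
    n.choose l * (p ^ l * (1 - p) ^ (n - l)) ≤ 1 := by
  rcases lt_or_ge n l with hnl | hln
  · simp [Nat.choose_eq_zero_of_lt hnl]
  have hq : 0 ≤ 1 - p := sub_nonneg.mpr hp1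
  calc (n.choose l : α) * (p ^ l * (1 - p) ^ (n - l))
      = p ^ l * (1 - p) ^ (n - l) * n.choose l := by ring
    _ ≤ ∑ j ∈ range (n + 1), p ^ j * (1 - p) ^ (n - j) * n.choose j :=
      Finset.single_le_sum (f := fun j => p ^ j * (1 - p) ^ (n - j) * n.choose j)
        (fun j _ => by positivity) (mem_range.mpr (Nat.lt_succ_of_le hln))
    _ = 1 := by rw [← add_pow, add_sub_cancel, one_pow]

section Isolation

variable {r : ℕ} (n : ℕ) (μ : Fin r → ℝ) (K : Fin r → ℕ)

/-- The probability that the selection set of a vertex lies in a prescribed set of `m` other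
vertices. -/
def selectWithinProb (m : ℕ) : ℝ :=
  ∑ c, μ c * ((m.choose (K c) : ℝ) / ((n - 1).choose (K c) : ℝ))

theorem Pr_forall_subset (s : Fin n → Finset (Fin n)) :
    Pr n μ K {ω | ∀ v, (ω v).2 ⊆ s v} =
      ∏ v, selectWithinProb n μ K ((s v).erase v).card := by
  classical
  set f : Fin n → Fin r × Finset (Fin n) → ℝ := fun v y =>
    if y.2 ⊆ s v then
      (if y.2.card = K y.1 ∧ v ∉ y.2 then μ y.1 / ((n - 1).choose (K y.1) : ℝ) else 0)
    else 0
  have hpoint (ω : Config n r) :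
      {ω : Config n r | ∀ v, (ω v).2 ⊆ s v}.indicator (wt n μ K) ω = ∏ v, f v (ω v) := by
    simp only [f, Finset.prod_ite_zero, Set.indicator_apply, Set.mem_ofPred_eq, wt, mem_univ,
      true_implies]
  have hvertex (v : Fin n) : ∑ y, f v y = selectWithinProb n μ K ((s v).erase v).card := by
    rw [Fintype.sum_prod_type, selectWithinProb]
    refine Finset.sum_congr rfl fun c _ => ?_
    have hsel : ({T | T ⊆ s v ∧ T.card = K c ∧ v ∉ T} : Finset (Finset (Fin n))) =
        ((s v).erase v).powersetCard (K c) := by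
      ext T
      simp only [mem_filter, mem_univ, true_and, mem_powersetCard, subset_erase]
      tauto
    simp only [f, ← ite_and, ← Finset.sum_filter, hsel, sum_const, card_powersetCard,
      nsmul_eq_mul]
    ring
  rw [Pr, Finset.sum_congr rfl fun ω _ => hpoint ω, ← Fintype.prod_sum]
  exact Finset.prod_congr rfl fun v _ => hvertex v

end Isolation

section Cut

variable {n : ℕ} (l : ℕ)

def sameSide (v : Fin n) : Finset (Fin n) := {u | (u : ℕ) < l ↔ (v : ℕ) < l}

theorem Bevent_eq_forall_subset_sameSide (r : ℕ) :
    Bevent n r l = {ω | ∀ v, (ω v).2 ⊆ sameSide l v} := by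
  ext ω
  simp only [Bevent, sameSide, Set.mem_ofPred_eq, subset_iff, mem_filter, mem_univ, true_and]
  constructor
  · intro h v u hu
    by_cases hul : (u : ℕ) < l <;> by_cases hvl : (v : ℕ) < l
    · exact iff_of_true hul hvl
    · exact absurd hu (h u v hul hvl).1
    · exact absurd hu (h v u hvl hul).2
    · exact iff_of_false hul hvl
  · intro h u v hu hv
    exact ⟨fun huv => hv ((h v huv).mp hu), fun hvu => hv ((h u hvu).mpr hu)⟩

theorem card_filter_not_val_lt (hl : l ≤ n) : #{u : Fin n | ¬ (u : ℕ) < l} = n - l := by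
  rw [filter_not, card_univ_sdiff, Fin.card_filter_val_lt, Fintype.card_fin, min_eq_right hl]

theorem card_erase_sameSide (hl : l ≤ n) (v : Fin n) :
    ((sameSide l v).erase v).card = if (v : ℕ) < l then l - 1 else n - l - 1 := by
  rw [card_erase_of_mem (by simp [sameSide])]
  by_cases hv : (v : ℕ) < l
  · simp [sameSide, hv, Fin.card_filter_val_lt, min_eq_right hl]
  · simp only [sameSide, hv, iff_false, if_false, card_filter_not_val_lt l hl]

end Cut

theorem Pr_Bevent {r : ℕ} (n : ℕ) (μ : Fin r → ℝ) (K : Fin r → ℕ) {l : ℕ} (hl : l ≤ n) :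
    Pr n μ K (Bevent n r l) =
      selectWithinProb n μ K (l - 1) ^ l * selectWithinProb n μ K (n - l - 1) ^ (n - l) := by
  rw [Bevent_eq_forall_subset_sameSide, Pr_forall_subset]
  simp only [card_erase_sameSide l hl, apply_ite, prod_ite, prod_const,
    Fin.card_filter_val_lt, min_eq_right hl, card_filter_not_val_lt l hl]

theorem sum_mul_pow_le_of_le_one {ι : Type*} [Fintype ι] [DecidableEq ι] {w : ι → ℝ}
    {k : ι → ℕ} {ρ : ℝ} (hw : ∀ i, 0 ≤ w i) (hk : ∀ i, 1 ≤ k i) (hρ0 : 0 ≤ ρ) (hρ1 : ρ ≤ 1)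
    (j : ι) : ∑ i, w i * ρ ^ k i ≤ (∑ i ∈ univ.erase j, w i) * ρ + w j * ρ ^ k j := by
  rw [← sum_erase_add univ _ (mem_univ j), sum_mul]
  gcongr with i
  · exact hw i
  · exact pow_le_of_le_one hρ0 hρ1 (Nat.one_le_iff_ne_zero.mp (hk i))

theorem mul_add_mul_pow_le_mul_exp {x y ρ : ℝ} {k : ℕ} (hxy : x + y = 1) (hρ : 0 ≤ ρ)
    (hk : 1 ≤ k) : x * ρ + y * ρ ^ k ≤ ρ * Real.exp (-(y * (1 - ρ ^ (k - 1)))) := by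
  obtain rfl : x = 1 - y := eq_sub_of_add_eq hxy
  have hpow : ρ ^ k = ρ * ρ ^ (k - 1) := by rw [← pow_succ', Nat.sub_add_cancel hk]
  calc (1 - y) * ρ + y * ρ ^ k = ρ * (1 - y * (1 - ρ ^ (k - 1))) := by rw [hpow]; ring
    _ ≤ ρ * Real.exp (-(y * (1 - ρ ^ (k - 1)))) :=
      mul_le_mul_of_nonneg_left (Real.one_sub_le_exp_neg _) hρ

theorem mul_add_mul_pow_le_mul_mul_exp {x y ρ : ℝ} {k : ℕ} (hx : 0 < x) (hy : 0 ≤ y)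
    (hρ0 : 0 ≤ ρ) (hρ : ρ ≤ 1 / 2) (hk : 1 ≤ k) :
    x * ρ + y * ρ ^ k ≤ ρ * x * Real.exp (y * ((1 / 2) ^ (k - 1) / x)) := by
  have hpow : ρ ^ k ≤ ρ * (1 / 2) ^ (k - 1) := by
    calc ρ ^ k = ρ * ρ ^ (k - 1) := by rw [← pow_succ', Nat.sub_add_cancel hk]
      _ ≤ ρ * (1 / 2) ^ (k - 1) := by gcongr
  calc x * ρ + y * ρ ^ k ≤ ρ * x * (y * ((1 / 2) ^ (k - 1) / x) + 1) := by
        field_simp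
        nlinarith [mul_le_mul_of_nonneg_left hpow hy]
    _ ≤ ρ * x * Real.exp (y * ((1 / 2) ^ (k - 1) / x)) := by
        gcongr
        exact Real.add_one_le_exp _

theorem choose_mul_cut_ratio_pow_le_one {n l : ℕ} (hl : 1 ≤ l) (hln : l < n) :
    n.choose l * ((((l : ℝ) - 1) / (n - 1)) ^ l * (1 - l / ((n : ℝ) - 1)) ^ (n - l)) ≤ 1 := by
  have hlr : (1 : ℝ) ≤ l := by exact_mod_cast hl
  have hlnr : (l : ℝ) + 1 ≤ n := by exact_mod_cast hln
  have hn1 : (0 : ℝ) < n - 1 := by linarith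
  have hq0 : 0 ≤ ((l : ℝ) - 1) / (n - 1) := div_nonneg (by linarith) hn1.le
  have hqp : ((l : ℝ) - 1) / (n - 1) ≤ l / n := by
    rw [div_le_div_iff₀ hn1 (by linarith)]
    nlinarith
  have hβ0 : 0 ≤ 1 - l / ((n : ℝ) - 1) := by
    rw [sub_nonneg, div_le_one hn1]
    linarith
  calc (n.choose l : ℝ) * ((((l : ℝ) - 1) / (n - 1)) ^ l * (1 - l / ((n : ℝ) - 1)) ^ (n - l))
      ≤ n.choose l * (((l : ℝ) / n) ^ l * (1 - l / (n : ℝ)) ^ (n - l)) := by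
        gcongr
        linarith
    _ ≤ 1 := choose_mul_pow_mul_one_sub_pow_le_one n l (by positivity)
        (div_le_one_of_le₀ (by linarith) (by positivity))

theorem one_sub_pow_le_exp_neg_mul {x : ℝ} (hx : x ≤ 1) (m : ℕ) :
    (1 - x) ^ m ≤ Real.exp (-(m * x)) := by
  rw [← mul_neg, Real.exp_nat_mul]
  exact pow_le_pow_left₀ (sub_nonneg.mpr hx) (Real.one_sub_le_exp_neg x) m

theorem choose_mul_pow_mul_pow_le_exp {n l : ℕ} {A B q β c a d : ℝ} (hA0 : 0 ≤ A) (hB0 : 0 ≤ B)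
    (hc : 0 ≤ c) (hA : A ≤ q * c * Real.exp a) (hB : B ≤ β * Real.exp (-d))
    (hqβ : n.choose l * (q ^ l * β ^ (n - l)) ≤ 1) :
    n.choose l * (A ^ l * B ^ (n - l)) ≤ c ^ l * Real.exp (l * a - (n - l : ℕ) * d) := by
  have hq0 : 0 ≤ q * c * Real.exp a := hA0.trans hA
  have hβ0 : 0 ≤ β * Real.exp (-d) := hB0.trans hB
  calc (n.choose l : ℝ) * (A ^ l * B ^ (n - l))
      ≤ n.choose l * ((q * c * Real.exp a) ^ l * (β * Real.exp (-d)) ^ (n - l)) := by gcongr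
    _ = n.choose l * (q ^ l * β ^ (n - l)) * (c ^ l * Real.exp (l * a - (n - l : ℕ) * d)) := by
        rw [sub_eq_add_neg, Real.exp_add, ← mul_neg, Real.exp_nat_mul, Real.exp_nat_mul]
        ring
    _ ≤ c ^ l * Real.exp (l * a - (n - l : ℕ) * d) := by
        exact mul_le_of_le_one_left (by positivity) hqβ

theorem Real.exp_neg_le_one_sub_mul {t : ℝ} (h0 : 0 ≤ t) (h1 : t ≤ 1) :
    Real.exp (-t) ≤ 1 - (1 - Real.exp (-1)) * t := by
  have h := convexOn_exp.2 (Set.mem_univ 0) (Set.mem_univ (-1)) (sub_nonneg.mpr h1) h0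
    (sub_add_cancel 1 t)
  simp only [smul_eq_mul, mul_zero, mul_neg, mul_one, zero_add, Real.exp_zero] at h
  linarith

theorem isolation_exponent_le_max {n l κ X b : ℝ} (hl : 2 ≤ l) (hln : 2 * l ≤ n) (hX : 0 ≤ X)
    (hXκ : 4 * X ≤ κ) (hb : b ≤ Real.exp (-(κ * (l / (n - 1))))) :
    l * X - (n - l) * (1 - b) ≤ max (-2 * (κ / 4 - X)) (-(n / 2) * (1 - Real.exp (-1) - X)) := by
  have he := Real.exp_neg_one_lt_half
  have hn1 : 0 < n - 1 := by linarith
  set t := κ * (l / (n - 1)) with ht_def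
  rcases le_total 1 t with ht | ht
  · apply le_max_of_le_right
    have hbe : b ≤ Real.exp (-1) := hb.trans (Real.exp_le_exp.mpr (neg_le_neg ht))
    have h1 := mul_nonneg (by linarith : 0 ≤ n / 2 - l) hX
    have h2 := mul_nonneg (by linarith : 0 ≤ n / 2 - l) (by linarith : 0 ≤ 1 - b)
    have h3 := mul_nonneg (by linarith : 0 ≤ n) (by linarith : 0 ≤ Real.exp (-1) - b)
    linarith
  · apply le_max_of_le_left
    have hκ : 0 ≤ κ := by linarith
    have hbt : (1 - Real.exp (-1)) * t ≤ 1 - b := by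
      linarith [Real.exp_neg_le_one_sub_mul (by positivity : 0 ≤ t) ht]
    have hcut : l * κ / 2 ≤ (n - l) * t := by
      rw [ht_def, mul_div_assoc', mul_comm κ, mul_div_assoc', le_div_iff₀ hn1]
      nlinarith [mul_nonneg (by linarith : (0 : ℝ) ≤ l) hκ]
    have h1 := mul_le_mul_of_nonneg_left hbt (by linarith : 0 ≤ n - l)
    have h2 := mul_le_mul_of_nonneg_left hcut (by linarith : 0 ≤ 1 - Real.exp (-1))
    have h3 := mul_nonneg (by linarith : 0 ≤ l - 2) (by linarith : 0 ≤ κ / 4 - X)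
    have h4 := mul_nonneg (by linarith : 0 ≤ 1 / 2 - Real.exp (-1))
      (mul_nonneg (by linarith : 0 ≤ l) hκ)
    linarith

theorem one_sub_sum_erase_eq {ι : Type*} [Fintype ι] [DecidableEq ι] {w : ι → ℝ}
    (hw : ∑ i, w i = 1) (j : ι) : 1 - ∑ i ∈ univ.erase j, w i = w j := by
  rw [sum_erase_eq_sub (mem_univ j), hw, sub_sub_cancel]

section Bounds

variable {r : ℕ} (n : ℕ) {μ : Fin r → ℝ} {K : Fin r → ℕ}

theorem selectWithinProb_nonneg (hμ : ∀ i, 0 ≤ μ i) (m : ℕ) : 0 ≤ selectWithinProb n μ K m :=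
  sum_nonneg fun c _ => mul_nonneg (hμ c) (by positivity)

theorem selectWithinProb_le (hμ : ∀ i, 0 ≤ μ i) (hsum : ∑ i, μ i = 1) (hK : ∀ i, 1 ≤ K i)
    (j : Fin r) {μt : ℝ} (hμt : μt = ∑ i ∈ univ.erase j, μ i) {m : ℕ} (hm : m ≤ n - 1) :
    selectWithinProb n μ K m ≤
      μt * (m / (n - 1 : ℕ)) + (1 - μt) * ((m : ℝ) / (n - 1 : ℕ)) ^ K j := by
  rw [hμt, one_sub_sum_erase_eq hsum j]
  exact (sum_le_sum fun c _ =>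
    mul_le_mul_of_nonneg_left (choose_div_choose_le_div_pow _ hm) (hμ c)).trans
    (sum_mul_pow_le_of_le_one hμ hK (by positivity)
      (div_le_one_of_le₀ (by exact_mod_cast hm) (by positivity)) j)

theorem choose_mul_Pr_Bevent_le_exp {l : ℕ} (hμ : ∀ i, 0 ≤ μ i) (hsum : ∑ i, μ i = 1)
    (hK : ∀ i, 1 ≤ K i) (j : Fin r) {μt : ℝ} (hμt : μt = ∑ i ∈ univ.erase j, μ i)
    (hμt0 : 0 < μt) (hl : 2 ≤ l) (hln : 2 * l ≤ n) :
    n.choose l * Pr n μ K (Bevent n r l) ≤ μt ^ l * Real.exp ((1 - μt) *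
      (l * ((1 / 2) ^ (K j - 1) / μt) - (n - l) * (1 - (1 - l / ((n : ℝ) - 1)) ^ (K j - 1)))) := by
  have hlr : (2 : ℝ) ≤ l := by exact_mod_cast hl
  have hlnr : 2 * (l : ℝ) ≤ n := by exact_mod_cast hln
  have hn1 : (0 : ℝ) < n - 1 := by linarith
  have hy : 0 ≤ 1 - μt := by
    rw [hμt, one_sub_sum_erase_eq hsum j]
    exact hμ j
  have hq : ((l - 1 : ℕ) : ℝ) / (n - 1 : ℕ) = (l - 1) / (n - 1) := by
    rw [Nat.cast_sub (by omega), Nat.cast_sub (by omega), Nat.cast_one]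
  have hβ : ((n - l - 1 : ℕ) : ℝ) / (n - 1 : ℕ) = 1 - l / (n - 1) := by
    rw [Nat.sub_sub, Nat.cast_sub (by omega), Nat.cast_sub (by omega), Nat.cast_add,
      Nat.cast_one, one_sub_div hn1.ne']
    ring
  have hA : selectWithinProb n μ K (l - 1) ≤
      (l - 1) / (n - 1) * μt * Real.exp ((1 - μt) * ((1 / 2) ^ (K j - 1) / μt)) := by
    refine (selectWithinProb_le n hμ hsum hK j hμt (by omega)).trans ?_
    rw [hq]
    refine mul_add_mul_pow_le_mul_mul_exp hμt0 hy (div_nonneg (by linarith) hn1.le) ?_ (hK j)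
    rw [div_le_iff₀ hn1]
    linarith
  have hB : selectWithinProb n μ K (n - l - 1) ≤ (1 - l / (n - 1)) *
      Real.exp (-((1 - μt) * (1 - (1 - l / ((n : ℝ) - 1)) ^ (K j - 1)))) := by
    refine (selectWithinProb_le n hμ hsum hK j hμt (by omega)).trans ?_
    rw [hβ]
    exact mul_add_mul_pow_le_mul_exp (by ring) (hβ ▸ by positivity) (hK j)
  rw [Pr_Bevent n μ K (by omega)]
  refine (choose_mul_pow_mul_pow_le_exp (selectWithinProb_nonneg n hμ _)
    (selectWithinProb_nonneg n hμ _) hμt0.le hA hB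
    (choose_mul_cut_ratio_pow_le_one (by omega) (by omega))).trans_eq ?_
  rw [Nat.cast_sub (by omega)]
  ring_nf

/-- `Ψ(n, μ, K)`, as a function of `μ̃ = μt` and `K_r = k`. -/
def Psi (k : ℕ) (μt : ℝ) : ℝ :=
  max (Real.exp (-2 * (1 - μt) * (((k : ℝ) - 1) / 4 - (1 / 2 : ℝ) ^ (k - 1) / μt)))
    (Real.exp (-(1 - μt) * ((n : ℝ) / 2) * (1 - Real.exp (-1) - (1 / 2 : ℝ) ^ (k - 1) / μt)))

theorem choose_mul_Pr_Bevent_le {l : ℕ} (hμ : ∀ i, 0 ≤ μ i) (hsum : ∑ i, μ i = 1)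
    (hK : ∀ i, 1 ≤ K i) (j : Fin r) {μt : ℝ} (hμt : μt = ∑ i ∈ univ.erase j, μ i)
    (hμt0 : 0 < μt) (hKj : 4 * ((1 / 2 : ℝ) ^ (K j - 1) / μt) + 1 ≤ K j) (hl : 2 ≤ l)
    (hln : 2 * l ≤ n) :
    n.choose l * Pr n μ K (Bevent n r l) ≤ μt ^ l * Psi n (K j) μt := by
  have hlr : (2 : ℝ) ≤ l := by exact_mod_cast hl
  have hlnr : 2 * (l : ℝ) ≤ n := by exact_mod_cast hln
  have hy : 0 ≤ 1 - μt := by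
    rw [hμt, one_sub_sum_erase_eq hsum j]
    exact hμ j
  have hpow := one_sub_pow_le_exp_neg_mul
    (x := l / ((n : ℝ) - 1)) (by rw [div_le_one (by linarith)]; linarith) (K j - 1)
  rw [Nat.cast_sub (hK j), Nat.cast_one] at hpow
  have hexp := isolation_exponent_le_max (X := (1 / 2) ^ (K j - 1) / μt) hlr hlnr
    (div_nonneg (by positivity) hμt0.le) (by linarith) hpow
  refine (choose_mul_Pr_Bevent_le_exp n hμ hsum hK j hμt hμt0 hl hln).trans ?_
  gcongr
  refine (Real.exp_le_exp.mpr (mul_le_mul_of_nonneg_left hexp hy)).trans_eq ?_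
  rw [mul_max_of_nonneg _ _ hy, Real.exp_monotone.map_max, Psi]
  ring_nf

end Bounds

theorem union_bound_sum_le_Psi_general
    (r : ℕ) (hr : 2 ≤ r) (μ : Fin r → ℝ)
    (hμ : ∀ i, 0 < μ i) (hsum : ∑ i, μ i = 1)
    (lst : Fin r)
    (μt : ℝ) (hμt : μt = ∑ i ∈ Finset.univ.erase lst, μ i) :
    ∃ N : ℕ, ∀ n, N ≤ n → ∀ K : Fin r → ℕ,
      Monotone K → (∀ i, 1 ≤ K i) → (∀ i, K i < n) →
      (⌈4 * ((1 / 2 : ℝ) ^ (K lst - 1) / μt) + 1⌉ ≤ (K lst : ℤ)) →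
      ∑ l ∈ Finset.Icc 2 (n / 2), (n.choose l : ℝ) * Pr n μ K (Bevent n r l) ≤
        (μt ^ 2 / (1 - μt)) *
          max
            (Real.exp (-2 * (1 - μt) *
              (((K lst : ℝ) - 1) / 4 - (1 / 2 : ℝ) ^ (K lst - 1) / μt)))
            (Real.exp (-(1 - μt) * ((n : ℝ) / 2) *
              (1 - Real.exp (-1) - (1 / 2 : ℝ) ^ (K lst - 1) / μt))) := by
  refine ⟨0, fun n _ K _ hK _ hceil => ?_⟩
  have : Nontrivial (Fin r) := Fin.nontrivial_iff_two_le.mpr hr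
  obtain ⟨i, hi⟩ := exists_ne lst
  have hμt0 : 0 < μt := hμt ▸ sum_pos (fun i _ => hμ i) ⟨i, mem_erase.mpr ⟨hi, mem_univ i⟩⟩
  have hμt1 : μt < 1 := by
    linarith [one_sub_sum_erase_eq hsum lst, hμ lst]
  have hKlst : 4 * ((1 / 2 : ℝ) ^ (K lst - 1) / μt) + 1 ≤ K lst :=
    (Int.le_ceil _).trans (by exact_mod_cast hceil)
  have hPsi : 0 ≤ Psi n (K lst) μt := (Real.exp_pos _).le.trans (le_max_left _ _)
  calc ∑ l ∈ Icc 2 (n / 2), (n.choose l : ℝ) * Pr n μ K (Bevent n r l)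
      ≤ ∑ l ∈ Icc 2 (n / 2), μt ^ l * Psi n (K lst) μt := by
        refine sum_le_sum fun l hl => ?_
        rw [mem_Icc] at hl
        exact choose_mul_Pr_Bevent_le n (fun i => (hμ i).le) hsum hK lst hμt hμt0 hKlst hl.1
          (by omega)
    _ = (∑ l ∈ Ico 2 (n / 2 + 1), μt ^ l) * Psi n (K lst) μt := by
        rw [Ico_add_one_right_eq_Icc, sum_mul]
    _ ≤ μt ^ 2 / (1 - μt) * Psi n (K lst) μt := by
        gcongr
        exact geom_sum_Ico_le_of_lt_one hμt0.le hμt1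

/-- eq. (26) of the paper. For all sufficiently large `n`, for every
admissible `K` with `K_r ≥ ⌈4·((1/2)^{K_r−1}/μ̃) + 1⌉`, the union-bound sum satisfies
`∑_{ℓ=2}^{⌊n/2⌋} C(n,ℓ)·P[B_{n,ℓ}] ≤ (μ̃²/(1−μ̃))·Ψ(n, μ, K)`. -/
theorem union_bound_sum_le_Psi
    (r : ℕ) (hr : 2 ≤ r) (μ : Fin r → ℝ)
    (hμ : ∀ i, 0 < μ i) (hsum : ∑ i, μ i = 1)
    (lst : Fin r) (hlst : (lst : ℕ) = r - 1)
    (μt : ℝ) (hμt : μt = ∑ i ∈ Finset.univ.erase lst, μ i) :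
    ∃ N : ℕ, ∀ n, N ≤ n → ∀ K : Fin r → ℕ,
      Monotone K → (∀ i, 1 ≤ K i) → (∀ i, K i < n) →
      (⌈4 * ((1 / 2 : ℝ) ^ (K lst - 1) / μt) + 1⌉ ≤ (K lst : ℤ)) →
      ∑ l ∈ Finset.Icc 2 (n / 2), (n.choose l : ℝ) * Pr n μ K (Bevent n r l) ≤
        (μt ^ 2 / (1 - μt)) *
          max
            (Real.exp (-2 * (1 - μt) *
              (((K lst : ℝ) - 1) / 4 - (1 / 2 : ℝ) ^ (K lst - 1) / μt)))
            (Real.exp (-(1 - μt) * ((n : ℝ) / 2) *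
              (1 - Real.exp (-1) - (1 / 2 : ℝ) ^ (K lst - 1) / μt))) :=
  union_bound_sum_le_Psi_general r hr μ hμ hsum lst μt hμt
end
end
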